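/- arXiv:2402.16166 — 2 statements merged into one kernel-verified Lean document; each statement's English description precedes it below -/
import Mathlib

section
/- With the unicyclic/tree setup and z_0 a leaf of highest level with level(z_0) ≥ 2, write N(y_0) = {z_0, z_1, …, z_s} ∪ {x_0} where y_0 is the unique neighbor of z_0, z_1,…,z_s are leaves, and x_0 is the unique non-leaf neighbor of y_0. Then ν_3(G) = max{ν_3(G_{z_0,1}), 1 + ν_3(G_{z_0,2})} if s ≥ 1, and ν_3(G) = max{ν_3(G_{z_0,1}), 1 + ν_3(G_{z_0,3})} if s = 0. -/
noncomputable section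

namespace PathIdeals

open MvPolynomial

variable {k : Type*} [Field k] {V : Type*} [Fintype V] [LinearOrder V]

/-- Transport a graded piece along an equality of degrees. -/
def castLinear (k : Type*) [Field k] (N : ℕ → Type*) [∀ a, AddCommGroup (N a)]
    [∀ a, Module k (N a)] {a b : ℕ} (h : a = b) : N a →ₗ[k] N b := by
  subst h; exact LinearMap.id

/-- The Koszul-type differential computing `Tor^S(k, N)` for a graded module `N` over
`S = k[x_v : v ∈ V]` given by its graded pieces `N a` together with the multiplication maps
`x_v ⬝ : N a → N (a+1)`.  The map goes from homological degree `i`, internal degree `j`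
(so coefficients in `N (j - i)`) to homological degree `i - 1`. -/
def koszulMap (k : Type*) [Field k] {V : Type*} [Fintype V] [LinearOrder V]
    (N : ℕ → Type*) [∀ a, AddCommGroup (N a)] [∀ a, Module k (N a)]
    (mul : V → ∀ a : ℕ, N a →ₗ[k] N (a + 1)) (i j : ℕ) :
    ({s : Finset V // s.card = i} →₀ N (j - i)) →ₗ[k]
      ({s : Finset V // s.card = i - 1} →₀ N (j - (i - 1))) :=
  if h : 1 ≤ i ∧ i ≤ j then
    Finsupp.lsum k fun s : {s : Finset V // s.card = i} =>
      ∑ v ∈ s.1.attach,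
        ((-1 : k) ^ (s.1.filter (fun w => w < v.1)).card) •
          ((Finsupp.lsingle
              (⟨s.1.erase v.1, by rw [Finset.card_erase_of_mem v.2, s.2]⟩ :
                {s : Finset V // s.card = i - 1})).comp
            ((castLinear k N (by omega : (j - i) + 1 = j - (i - 1))).comp (mul v.1 (j - i))))
  else 0

/-- The `(i,j)`-th graded Betti number `β_{i,j} = dim_k Tor_i^S(k, N)_j` of the graded module
`N`, computed as the dimension of the homology of the Koszul complex tensored with `N`.
(For modules generated in non-negative degrees, such as ideals and their quotient rings,
the Betti numbers vanish when `j < i`.) -/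
def bettiAux (k : Type*) [Field k] {V : Type*} [Fintype V] [LinearOrder V]
    (N : ℕ → Type*) [∀ a, AddCommGroup (N a)] [∀ a, Module k (N a)]
    (mul : V → ∀ a : ℕ, N a →ₗ[k] N (a + 1)) (i j : ℕ) : ℕ :=
  if j < i then 0
  else
    Module.finrank k
      (↥(LinearMap.ker (koszulMap k N mul i j)) ⧸
        Submodule.comap (LinearMap.ker (koszulMap k N mul i j)).subtype
          (LinearMap.range (koszulMap k N mul (i + 1) j)))

/-- The degree-`a` graded piece of a homogeneous ideal `I ⊆ S`, as a `k`-subspace. -/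
def idealPiece (k : Type*) [Field k] {V : Type*} (I : Ideal (MvPolynomial V k)) (a : ℕ) :
    Submodule k (MvPolynomial V k) :=
  Submodule.restrictScalars k I ⊓ homogeneousSubmodule V k a

/-- Multiplication by the variable `x_v` on graded pieces of an ideal. -/
def idealMul {k : Type*} [Field k] {V : Type*} (I : Ideal (MvPolynomial V k)) (v : V) (a : ℕ) :
    ↥(idealPiece k I a) →ₗ[k] ↥(idealPiece k I (a + 1)) where
  toFun f := ⟨X v * f.1, by
    obtain ⟨h1, h2⟩ := Submodule.mem_inf.mp f.2
    refine Submodule.mem_inf.mpr ⟨I.mul_mem_left _ h1, ?_⟩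
    rw [mem_homogeneousSubmodule] at h2 ⊢
    simpa [add_comm] using (isHomogeneous_X k v).mul h2⟩
  map_add' f g := by ext; simp [mul_add]
  map_smul' c f := by ext; simp [mul_smul_comm]

/-- The `(i,j)`-th graded Betti number `β_{i,j}(I) = dim_k Tor_i^S(k, I)_j` of a homogeneous
ideal `I` of the polynomial ring `S = k[x_v : v ∈ V]`. -/
def gradedBetti (k : Type*) [Field k] {V : Type*} [Fintype V] [LinearOrder V]
    (I : Ideal (MvPolynomial V k)) (i j : ℕ) : ℕ :=
  bettiAux k (fun a => ↥(idealPiece k I a)) (idealMul I) i j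

/-- The projective dimension `pd(I) = sup { i | β_{i,j}(I) ≠ 0 for some j }` of a homogeneous
ideal of the polynomial ring. -/
def pdIdeal (k : Type*) [Field k] {V : Type*} [Fintype V] [LinearOrder V]
    (I : Ideal (MvPolynomial V k)) : ℕ :=
  sSup {i | ∃ j, gradedBetti k I i j ≠ 0}

/-- The Castelnuovo–Mumford regularity `reg(I) = sup { j - i | β_{i,j}(I) ≠ 0 }` of a
homogeneous ideal of the polynomial ring. -/
def regIdeal (k : Type*) [Field k] {V : Type*} [Fintype V] [LinearOrder V]
    (I : Ideal (MvPolynomial V k)) : ℕ :=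
  sSup {r | ∃ i, gradedBetti k I i (i + r) ≠ 0}

/-- Multiplication by `x_v` on the (constant) ungraded module underlying an ideal. -/
def idealMulTotal {k : Type*} [Field k] {V : Type*} (I : Ideal (MvPolynomial V k)) (v : V)
    (_ : ℕ) : ↥(Submodule.restrictScalars k I) →ₗ[k] ↥(Submodule.restrictScalars k I) where
  toFun f := ⟨X v * f.1, I.mul_mem_left _ f.2⟩
  map_add' f g := by ext; simp [mul_add]
  map_smul' c f := by ext; simp [mul_smul_comm]

/-- The `i`-th total Betti number `β_i(I) = dim_k Tor_i^S(k, I)` of a homogeneous ideal of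
the polynomial ring, computed as the dimension of ungraded Koszul homology. -/
def totalBetti (k : Type*) [Field k] {V : Type*} [Fintype V] [LinearOrder V]
    (I : Ideal (MvPolynomial V k)) (i : ℕ) : ℕ :=
  bettiAux k (fun _ => ↥(Submodule.restrictScalars k I)) (idealMulTotal I) i (i + 1)

/-- `P = I + J` is a Betti splitting if `β_i(P) = β_i(I) + β_i(J) + β_{i-1}(I ∩ J)`
for all `i ≥ 0` (where `β_{-1} = 0`). -/
def IsBettiSplitting (k : Type*) [Field k] {V : Type*} [Fintype V] [LinearOrder V]
    (P I J : Ideal (MvPolynomial V k)) : Prop :=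
  P = I + J ∧ totalBetti k P 0 = totalBetti k I 0 + totalBetti k J 0 ∧
    ∀ i : ℕ, totalBetti k P (i + 1) =
      totalBetti k I (i + 1) + totalBetti k J (i + 1) + totalBetti k (I ⊓ J) i

/-- The subspace of the degree-`a` homogeneous component of `S` consisting of elements of a
homogeneous ideal `I`. -/
def quotSub (k : Type*) [Field k] {V : Type*} (I : Ideal (MvPolynomial V k)) (a : ℕ) :
    Submodule k ↥(homogeneousSubmodule V k a) :=
  Submodule.comap (homogeneousSubmodule V k a).subtype (Submodule.restrictScalars k I)

/-- The degree-`a` graded piece of the quotient ring `S/I`. -/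
def quotPiece (k : Type*) [Field k] {V : Type*} (I : Ideal (MvPolynomial V k)) (a : ℕ) :
    Type _ :=
  ↥(homogeneousSubmodule V k a) ⧸ quotSub k I a

instance (I : Ideal (MvPolynomial V k)) (a : ℕ) : AddCommGroup (quotPiece k I a) :=
  inferInstanceAs (AddCommGroup (↥(homogeneousSubmodule V k a) ⧸ quotSub k I a))

instance (I : Ideal (MvPolynomial V k)) (a : ℕ) : Module k (quotPiece k I a) :=
  inferInstanceAs (Module k (↥(homogeneousSubmodule V k a) ⧸ quotSub k I a))

/-- Multiplication by `x_v` on the homogeneous components of `S`. -/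
def homogMul (k : Type*) [Field k] {V : Type*} (v : V) (a : ℕ) :
    ↥(homogeneousSubmodule V k a) →ₗ[k] ↥(homogeneousSubmodule V k (a + 1)) where
  toFun f := ⟨X v * f.1, by
    have h2 := (mem_homogeneousSubmodule _ _).mp f.2
    rw [mem_homogeneousSubmodule]
    simpa [add_comm] using (isHomogeneous_X k v).mul h2⟩
  map_add' f g := by ext; simp [mul_add]
  map_smul' c f := by ext; simp [mul_smul_comm]

/-- Multiplication by `x_v` on graded pieces of the quotient ring `S/I`. -/
def quotMul {k : Type*} [Field k] {V : Type*} (I : Ideal (MvPolynomial V k)) (v : V) (a : ℕ) :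
    quotPiece k I a →ₗ[k] quotPiece k I (a + 1) :=
  Submodule.mapQ (quotSub k I a) (quotSub k I (a + 1)) (homogMul k v a)
    (fun _ hx => I.mul_mem_left _ hx)

/-- The Castelnuovo–Mumford regularity `reg(S/I) = sup { j - i | β_{i,j}(S/I) ≠ 0 }` of the
quotient of the polynomial ring by a homogeneous ideal. -/
def regQuot (k : Type*) [Field k] {V : Type*} [Fintype V] [LinearOrder V]
    (I : Ideal (MvPolynomial V k)) : ℕ :=
  sSup {r | ∃ i, bettiAux k (quotPiece k I) (quotMul I) i (i + r) ≠ 0}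

/-! ### Graphs, path ideals and path induced matching numbers -/

/-- `l` is (the vertex list of) a `t`-path of `G`: `t` distinct vertices with consecutive
vertices adjacent. -/
def IsPathList {V : Type*} (G : SimpleGraph V) (t : ℕ) (l : List V) : Prop :=
  l.length = t ∧ l.Nodup ∧ l.Chain' G.Adj

/-- The `t`-path ideal `I_t(G)` of the graph `G`, generated by the monomials
`x_{u_1} ⋯ x_{u_t}` over all `t`-paths `u_1, …, u_t` of `G`. -/
def pathIdeal (k : Type*) [Field k] {V : Type*} (G : SimpleGraph V) (t : ℕ) :
    Ideal (MvPolynomial V k) :=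
  Ideal.span {f | ∃ l : List V, IsPathList G t l ∧ f = (l.map X).prod}

/-- A family of `t`-paths indexed by `Fin n` is a `t`-path induced matching of `G` if the
paths are pairwise vertex-disjoint and the only edges of `G` between vertices of the paths
are the edges of the paths. -/
def IsPathInducedMatching {V : Type*} (G : SimpleGraph V) (t : ℕ) {n : ℕ}
    (P : Fin n → List V) : Prop :=
  (∀ a, IsPathList G t (P a)) ∧
    (∀ a b, a ≠ b → ∀ x, x ∈ P a → x ∉ P b) ∧
    (∀ x y : V, (∃ a, x ∈ P a) → (∃ b, y ∈ P b) → G.Adj x y →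
      ∃ a, [x, y] <:+: P a ∨ [y, x] <:+: P a)

/-- The `t`-path induced matching number `ν_t(G)`: the largest size of a `t`-path induced
matching of `G`. -/
def pathNu {V : Type*} (G : SimpleGraph V) (t : ℕ) : ℕ :=
  sSup {n | ∃ P : Fin n → List V, IsPathInducedMatching G t P}

/-- The induced subgraph of `G` on a set `A` of vertices, viewed as a graph on the same
vertex set (all vertices outside `A` become isolated). -/
def inducedOn {V : Type*} (G : SimpleGraph V) (A : Set V) : SimpleGraph V where
  Adj x y := G.Adj x y ∧ x ∈ A ∧ y ∈ A
  symm := ⟨fun _ _ ⟨h, hx, hy⟩ => ⟨h.symm, hy, hx⟩⟩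
  loopless := ⟨fun x ⟨h, _, _⟩ => G.loopless.irrefl x h⟩

/-- The set of neighbors of a set of vertices. -/
def nbhd {V : Type*} (G : SimpleGraph V) (A : Set V) : Set V :=
  {y | ∃ x ∈ A, G.Adj x y}

/-- The closed neighborhood `N[A] = A ∪ N(A)` of a set of vertices. -/
def closedNbhd {V : Type*} (G : SimpleGraph V) (A : Set V) : Set V :=
  A ∪ nbhd G A

/-- A leaf of a graph is a vertex with a unique neighbor. -/
def IsLeaf {V : Type*} (G : SimpleGraph V) (x : V) : Prop :=
  ∃! y, G.Adj x y

/-- The level of a vertex `y`: its distance to the set of distinguished vertices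
(the cycle vertices, resp. the root in the tree case). -/
def levelTo {V : Type*} (G : SimpleGraph V) {m : ℕ} (v : Fin m → V) (y : V) : ℕ :=
  sInf {d | ∃ i, G.dist (v i) y = d}

/-- `v` lists the vertices of a cycle of `G` (in cyclic order). -/
def IsCycleOn {V : Type*} (G : SimpleGraph V) {m : ℕ} [NeZero m] (v : Fin m → V) : Prop :=
  Function.Injective v ∧ ∀ i : Fin m, G.Adj (v i) (v (i + 1))

/-- Every cycle of `G` has its vertices among `v 0, …, v (m-1)`; together with `IsCycleOn`
this says that the cycle on `v` is the unique cycle of `G`. -/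
def UniqueCycle {V : Type*} (G : SimpleGraph V) {m : ℕ} (v : Fin m → V) : Prop :=
  ∀ (x : V) (c : G.Walk x x), c.IsCycle → ∀ y ∈ c.support, y ∈ Set.range v

/-- `G` has at most one cycle: either `G` is a tree (and `m = 1`, `v 0` being a chosen root),
or `G` has the unique cycle `v 0, …, v (m-1)` of length `m ≥ 3`. -/
def AtMostOneCycle {V : Type*} (G : SimpleGraph V) {m : ℕ} [NeZero m] (v : Fin m → V) : Prop :=
  (m = 1 ∧ G.IsAcyclic) ∨ (3 ≤ m ∧ IsCycleOn G v ∧ UniqueCycle G v)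

/-- The graph `Γ_G(C)`: the induced subgraph of `G` obtained by deleting the boundary
`∂(C) = N(C) \ C` of the cycle with vertex set `Cset`. -/
def Gamma {V : Type*} (G : SimpleGraph V) (Cset : Set V) : SimpleGraph V :=
  inducedOn G (nbhd G Cset \ Cset)ᶜ

/-- A graph (containing the cycle with vertex set `Cset`) is `3`-proximal if
`ν_3(G) = ν_3(Γ_G(C))`. -/
def IsProximal3 {V : Type*} (G : SimpleGraph V) (Cset : Set V) : Prop :=
  pathNu G 3 = pathNu (Gamma G Cset) 3

/-!
A maximum induced matching of `3`-paths either avoids the pendant vertices `z_i`, and then it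
is an induced matching of `G_{z_0,1}`, or one of its paths passes through some `z_i`. Such a path
is `z_i y_0 c` with `c ∈ N(y_0)`, and `c = x_0` when `s = 0`; every other path avoids its closed
neighbourhood, which contains `N[y_0]` (resp. `N[{y_0, x_0}]`), so the remaining paths form an
induced matching of `G_{z_0,2}` (resp. `G_{z_0,3}`). Conversely, `z_0 y_0 z_1` (resp.
`z_0 y_0 x_0`) is an induced path whose closed neighbourhood is `N[y_0]` (resp. `N[{y_0, x_0}]`),
so it can be added to any induced matching of that graph.
-/

section PathMatchings

variable {W : Type*} {G : SimpleGraph W} {t n : ℕ}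

lemma adj_iff_of_neighborSet_eq {y z w : W} (hz : G.neighborSet z = {y}) :
    G.Adj z w ↔ w = y := by
  rw [← SimpleGraph.mem_neighborSet, hz, Set.mem_singleton_iff]

lemma isLeaf_of_neighborSet_eq {y z : W} (hz : G.neighborSet z = {y}) : IsLeaf G z :=
  ⟨y, (adj_iff_of_neighborSet_eq hz).mpr rfl, fun _ => (adj_iff_of_neighborSet_eq hz).mp⟩

lemma closedNbhd_mono {A B : Set W} (h : A ⊆ B) : closedNbhd G A ⊆ closedNbhd G B := by
  rintro x (hx | ⟨a, ha, hax⟩)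
  exacts [Or.inl (h hx), Or.inr ⟨a, h ha, hax⟩]

lemma closedNbhd_insert_subset_of_neighborSet_eq {y z : W} (hz : G.neighborSet z = {y})
    (S : Set W) : closedNbhd G (insert z S) ⊆ closedNbhd G (insert y S) := by
  have hzy : G.Adj y z := ((adj_iff_of_neighborSet_eq hz).mpr rfl).symm
  rintro x ((rfl | hx) | ⟨a, rfl | ha, hax⟩)
  · exact Or.inr ⟨y, Set.mem_insert _ _, hzy⟩
  · exact Or.inl (Set.mem_insert_of_mem _ hx)
  · obtain rfl := (adj_iff_of_neighborSet_eq hz).mp hax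
    exact Or.inl (Set.mem_insert _ _)
  · exact Or.inr ⟨a, Set.mem_insert_of_mem _ ha, hax⟩

lemma mem_and_mem_of_pair_infix {x y : W} {l : List W} (h : [x, y] <:+: l ∨ [y, x] <:+: l) :
    x ∈ l ∧ y ∈ l := by
  rcases h with h | h <;> exact ⟨h.subset (by simp), h.subset (by simp)⟩

lemma isPathList_three_iff {a b c : W} :
    IsPathList G 3 [a, b, c] ↔ a ≠ c ∧ G.Adj a b ∧ G.Adj b c := by
  constructor
  · rintro ⟨-, hnd, hch : List.IsChain G.Adj [a, b, c]⟩
    simp only [List.nodup_cons, List.mem_cons, List.not_mem_nil, not_or] at hnd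
    simp only [List.isChain_cons_cons, List.isChain_singleton, and_true] at hch
    exact ⟨hnd.1.2.1, hch⟩
  · rintro ⟨hac, hab, hbc⟩
    refine ⟨rfl, ?_, ?_⟩
    · simp [hab.ne, hac, hbc.ne]
    · show List.IsChain G.Adj [a, b, c]
      simp [hab, hbc]

lemma IsPathList.of_inducedOn {B : Set W} {l : List W} (h : IsPathList (inducedOn G B) t l) :
    IsPathList G t l :=
  ⟨h.1, h.2.1, h.2.2.imp fun _ _ hxy => hxy.1⟩

lemma IsPathList.mem_of_inducedOn (ht : 2 ≤ t) {B : Set W} {l : List W}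
    (h : IsPathList (inducedOn G B) t l) : ∀ x ∈ l, x ∈ B := by
  refine h.2.2.induction _ l (fun _ _ hxy _ => hxy.2.2) fun hl => ?_
  obtain ⟨a, b, l, rfl⟩ : ∃ a b l', l = a :: b :: l' := by
    rcases l with _ | ⟨a, _ | ⟨b, l⟩⟩
    · exact absurd rfl hl
    · have : 1 = t := h.1
      omega
    · exact ⟨a, b, l, rfl⟩
  exact (List.isChain_cons_cons.mp h.2.2).1.2.1

lemma IsPathList.toInducedOn {B : Set W} {l : List W} (h : IsPathList G t l)
    (hB : ∀ x ∈ l, x ∈ B) : IsPathList (inducedOn G B) t l :=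
  ⟨h.1, h.2.1, h.2.2.imp_of_mem_imp fun x y hx hy hxy => ⟨hxy, hB x hx, hB y hy⟩⟩

lemma isPathInducedMatching_zero (P : Fin 0 → List W) : IsPathInducedMatching G t P :=
  ⟨finZeroElim, finZeroElim, fun _ _ ⟨a, _⟩ => a.elim0⟩

lemma IsPathInducedMatching.of_inducedOn (ht : 2 ≤ t) {B : Set W} {P : Fin n → List W}
    (h : IsPathInducedMatching (inducedOn G B) t P) : IsPathInducedMatching G t P := by
  refine ⟨fun a => (h.1 a).of_inducedOn, h.2.1, fun x y ⟨a, hx⟩ ⟨b, hy⟩ hxy => ?_⟩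
  exact h.2.2 x y ⟨a, hx⟩ ⟨b, hy⟩
    ⟨hxy, (h.1 a).mem_of_inducedOn ht x hx, (h.1 b).mem_of_inducedOn ht y hy⟩

lemma IsPathInducedMatching.toInducedOn {B : Set W} {P : Fin n → List W}
    (h : IsPathInducedMatching G t P) (hB : ∀ a, ∀ x ∈ P a, x ∈ B) :
    IsPathInducedMatching (inducedOn G B) t P :=
  ⟨fun a => (h.1 a).toInducedOn (hB a), h.2.1, fun x y hx hy hxy => h.2.2 x y hx hy hxy.1⟩

lemma IsPathInducedMatching.not_mem_closedNbhd {P : Fin n → List W}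
    (h : IsPathInducedMatching G t P) {a b : Fin n} (hba : b ≠ a) {x : W} (hx : x ∈ P b) :
    x ∉ closedNbhd G {x | x ∈ P a} := by
  rintro (hxa | ⟨q, hq, hqx⟩)
  · exact h.2.1 b a hba x hx hxa
  · obtain ⟨d, hd⟩ := h.2.2 q x ⟨a, hq⟩ ⟨b, hx⟩ hqx
    obtain ⟨hqd, hxd⟩ := mem_and_mem_of_pair_infix hd
    obtain rfl : d = a := by_contra fun hda => h.2.1 d a hda q hqd hq
    exact h.2.1 b d hba x hx hxd

lemma IsPathInducedMatching.comp_succAbove {P : Fin (n + 1) → List W}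
    (h : IsPathInducedMatching G t P) (a : Fin (n + 1)) :
    IsPathInducedMatching G t (P ∘ a.succAbove) := by
  refine ⟨fun i => h.1 _, fun i j hij => h.2.1 _ _ (a.succAbove_right_injective.ne hij),
    fun x y ⟨i, hx⟩ ⟨j, hy⟩ hxy => ?_⟩
  obtain ⟨d, hd⟩ := h.2.2 x y ⟨_, hx⟩ ⟨_, hy⟩ hxy
  have hda : d ≠ a := by
    rintro rfl
    exact h.2.1 _ d (d.succAbove_ne i) x hx (mem_and_mem_of_pair_infix hd).1
  obtain ⟨i', rfl⟩ := Fin.exists_succAbove_eq hda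
  exact ⟨i', hd⟩

lemma IsPathInducedMatching.inducedOn_compl_comp_succAbove {P : Fin (n + 1) → List W}
    (h : IsPathInducedMatching G t P) (a : Fin (n + 1)) {A : Set W}
    (hA : A ⊆ closedNbhd G {x | x ∈ P a}) :
    IsPathInducedMatching (inducedOn G Aᶜ) t (P ∘ a.succAbove) :=
  (h.comp_succAbove a).toInducedOn fun i _ hx hxA =>
    h.not_mem_closedNbhd (a.succAbove_ne i) hx (hA hxA)

def IsInducedPathList (G : SimpleGraph W) (t : ℕ) (l : List W) : Prop :=
  IsPathList G t l ∧ ∀ x ∈ l, ∀ y ∈ l, G.Adj x y → [x, y] <:+: l ∨ [y, x] <:+: l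

lemma isInducedPathList_three {a b c : W} (hac : a ≠ c) (hab : G.Adj a b) (hbc : G.Adj b c)
    (hnac : ¬ G.Adj a c) : IsInducedPathList G 3 [a, b, c] := by
  refine ⟨isPathList_three_iff.mpr ⟨hac, hab, hbc⟩, fun x hx y hy hxy => ?_⟩
  simp only [List.mem_cons, List.not_mem_nil, or_false] at hx hy
  rcases hx with rfl | rfl | rfl <;> rcases hy with rfl | rfl | rfl
  all_goals first
    | exact absurd hxy (G.loopless.irrefl _)
    | exact absurd hxy hnac
    | exact absurd hxy.symm hnac
    | exact Or.inl ⟨[], [c], rfl⟩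
    | exact Or.inr ⟨[], [c], rfl⟩
    | exact Or.inl ⟨[a], [], rfl⟩
    | exact Or.inr ⟨[a], [], rfl⟩

lemma IsPathInducedMatching.cons (ht : 2 ≤ t) {A : Set W} {Q : List W}
    (hQ : IsInducedPathList G t Q) (hQA : closedNbhd G {x | x ∈ Q} ⊆ A)
    {P : Fin n → List W} (hP : IsPathInducedMatching (inducedOn G Aᶜ) t P) :
    IsPathInducedMatching G t (Fin.cons Q P) := by
  have hPG := hP.of_inducedOn ht
  have hPA : ∀ i, ∀ x ∈ P i, x ∉ A := fun i => (hP.1 i).mem_of_inducedOn ht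
  have hQnbhd : ∀ x ∈ Q, ∀ y, G.Adj x y → y ∈ A := fun x hx y hxy => hQA (Or.inr ⟨x, hx, hxy⟩)
  refine ⟨Fin.cases hQ.1 hPG.1, ?_, ?_⟩
  · intro a b hab x
    cases a using Fin.cases <;> cases b using Fin.cases
    · exact absurd rfl hab
    · exact fun hx hx' => hPA _ x hx' (hQA (Or.inl hx))
    · exact fun hx hx' => hPA _ x hx (hQA (Or.inl hx'))
    · exact hPG.2.1 _ _ (fun e => hab (congrArg _ e)) x
  · intro x y hx hy hxy
    simp only [Fin.exists_fin_succ, Fin.cons_zero, Fin.cons_succ] at hx hy ⊢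
    rcases hx with hx | ⟨i, hx⟩ <;> rcases hy with hy | ⟨j, hy⟩
    · exact Or.inl (hQ.2 x hx y hy hxy)
    · exact absurd (hQnbhd x hx y hxy) (hPA j y hy)
    · exact absurd (hQnbhd y hy x hxy.symm) (hPA i x hx)
    · exact Or.inr (hP.2.2 x y ⟨i, hx⟩ ⟨j, hy⟩ ⟨hxy, hPA i x hx, hPA j y hy⟩)

lemma IsPathInducedMatching.le_card [Finite W] (ht : 1 ≤ t) {P : Fin n → List W}
    (h : IsPathInducedMatching G t P) : n ≤ Nat.card W := by
  have hne : ∀ a, ∃ x, x ∈ P a := fun a =>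
    List.exists_mem_of_length_pos (by rw [(h.1 a).1]; omega)
  choose f hf using hne
  have hf_inj : Function.Injective f := fun a b hab =>
    by_contra fun hne => h.2.1 a b hne (f a) (hf a) (hab ▸ hf b)
  simpa using Nat.card_le_card_of_injective f hf_inj

lemma nonempty_pathInducedMatching_sizes :
    {n | ∃ P : Fin n → List W, IsPathInducedMatching G t P}.Nonempty :=
  ⟨0, Fin.elim0, isPathInducedMatching_zero _⟩

lemma bddAbove_pathInducedMatching_sizes [Finite W] (ht : 1 ≤ t) :
    BddAbove {n | ∃ P : Fin n → List W, IsPathInducedMatching G t P} :=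
  ⟨Nat.card W, fun _ ⟨_, hP⟩ => hP.le_card ht⟩

lemma le_pathNu [Finite W] (ht : 1 ≤ t) {P : Fin n → List W}
    (h : IsPathInducedMatching G t P) : n ≤ pathNu G t :=
  le_csSup (bddAbove_pathInducedMatching_sizes ht) ⟨P, h⟩

lemma pathNu_le {N : ℕ} (h : ∀ n (P : Fin n → List W), IsPathInducedMatching G t P → n ≤ N) :
    pathNu G t ≤ N :=
  csSup_le nonempty_pathInducedMatching_sizes fun n ⟨P, hP⟩ => h n P hP

lemma exists_isPathInducedMatching_pathNu [Finite W] (ht : 1 ≤ t) :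
    ∃ P : Fin (pathNu G t) → List W, IsPathInducedMatching G t P :=
  Nat.sSup_mem nonempty_pathInducedMatching_sizes (bddAbove_pathInducedMatching_sizes ht)

lemma pathNu_inducedOn_le [Finite W] (ht : 2 ≤ t) (B : Set W) :
    pathNu (inducedOn G B) t ≤ pathNu G t :=
  pathNu_le fun _ _ hP => le_pathNu (by omega) (hP.of_inducedOn ht)

lemma one_add_pathNu_inducedOn_compl_le [Finite W] (ht : 2 ≤ t) {A : Set W} {Q : List W}
    (hQ : IsInducedPathList G t Q) (hQA : closedNbhd G {x | x ∈ Q} ⊆ A) :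
    1 + pathNu (inducedOn G Aᶜ) t ≤ pathNu G t := by
  obtain ⟨P, hP⟩ := exists_isPathInducedMatching_pathNu (G := inducedOn G Aᶜ) (t := t) (by omega)
  rw [add_comm]
  exact le_pathNu (by omega) (hP.cons ht hQ hQA)

lemma pathNu_le_max [Finite W] (ht : 1 ≤ t) {Z A : Set W}
    (hZA : ∀ Q, IsPathList G t Q → (∃ x ∈ Q, x ∈ Z) → A ⊆ closedNbhd G {x | x ∈ Q}) :
    pathNu G t ≤ max (pathNu (inducedOn G Zᶜ) t) (1 + pathNu (inducedOn G Aᶜ) t) := by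
  refine pathNu_le fun n P hP => ?_
  by_cases hmeet : ∃ a, ∃ x ∈ P a, x ∈ Z
  · obtain ⟨a, hPa⟩ := hmeet
    obtain ⟨n, rfl⟩ : ∃ n', n = n' + 1 := Nat.exists_eq_add_one.mpr a.pos
    have hrest := hP.inducedOn_compl_comp_succAbove a (hZA _ (hP.1 a) hPa)
    exact le_max_of_le_right (by have := le_pathNu ht hrest; omega)
  · push Not at hmeet
    exact le_max_of_le_left (le_pathNu ht (hP.toInducedOn hmeet))

theorem pathNu_eq_max [Finite W] (ht : 2 ≤ t) {Z A : Set W} {Q : List W}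
    (hQ : IsInducedPathList G t Q) (hQA : closedNbhd G {x | x ∈ Q} ⊆ A)
    (hZA : ∀ Q', IsPathList G t Q' → (∃ x ∈ Q', x ∈ Z) → A ⊆ closedNbhd G {x | x ∈ Q'}) :
    pathNu G t = max (pathNu (inducedOn G Zᶜ) t) (1 + pathNu (inducedOn G Aᶜ) t) :=
  le_antisymm (pathNu_le_max (by omega) hZA)
    (max_le (pathNu_inducedOn_le ht _) (one_add_pathNu_inducedOn_compl_le ht hQ hQA))

lemma IsPathList.exists_setOf_mem_eq_of_neighborSet_eq {y z : W} {Q : List W}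
    (hQ : IsPathList G 3 Q) (hz : G.neighborSet z = {y}) (hzQ : z ∈ Q) :
    ∃ c, c ≠ z ∧ G.Adj y c ∧ {x | x ∈ Q} = {z, y, c} := by
  have hadj : ∀ w, G.Adj z w ↔ w = y := fun _ => adj_iff_of_neighborSet_eq hz
  obtain ⟨a, b, c, rfl⟩ : ∃ a b c, Q = [a, b, c] := by
    match Q, hQ.1 with
    | [a, b, c], _ => exact ⟨a, b, c, rfl⟩
  obtain ⟨hac, hab, hbc⟩ := isPathList_three_iff.mp hQ
  simp only [List.mem_cons, List.not_mem_nil, or_false] at hzQ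
  rcases hzQ with rfl | rfl | rfl
  · obtain rfl := (hadj b).mp hab
    exact ⟨c, hac.symm, hbc, by ext; simp⟩
  · exact absurd (((hadj a).mp hab.symm).trans ((hadj c).mp hbc).symm) hac
  · obtain rfl := (hadj b).mp hbc.symm
    exact ⟨a, hac, hab.symm, by ext; simp; tauto⟩

theorem pathNu_eq_max_of_two_pendants [Finite W] {y z z' : W} {Z : Set W}
    (hz : G.neighborSet z = {y}) (hz' : G.neighborSet z' = {y}) (hzz' : z ≠ z')
    (hZ : ∀ w ∈ Z, G.neighborSet w = {y}) :
    pathNu G 3 = max (pathNu (inducedOn G Zᶜ) 3)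
      (1 + pathNu (inducedOn G (closedNbhd G {y})ᶜ) 3) := by
  have hzy : G.Adj z y := (adj_iff_of_neighborSet_eq hz).mpr rfl
  have hz'y : G.Adj z' y := (adj_iff_of_neighborSet_eq hz').mpr rfl
  have hnzz' : ¬ G.Adj z z' := fun h => hz'y.ne ((adj_iff_of_neighborSet_eq hz).mp h)
  refine pathNu_eq_max (t := 3) (by norm_num)
    (isInducedPathList_three hzz' hzy hz'y.symm hnzz') ?_ ?_
  · calc closedNbhd G {x | x ∈ [z, y, z']}
        = closedNbhd G (insert z (insert z' {y})) := by congr 1; ext; simp; tauto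
      _ ⊆ closedNbhd G (insert y (insert z' {y})) :=
        closedNbhd_insert_subset_of_neighborSet_eq hz _
      _ = closedNbhd G (insert z' {y}) := by rw [Set.insert_comm, Set.pair_eq_singleton]
      _ ⊆ closedNbhd G (insert y {y}) := closedNbhd_insert_subset_of_neighborSet_eq hz' _
      _ = closedNbhd G {y} := by rw [Set.pair_eq_singleton]
  · rintro Q hQ ⟨w, hwQ, hwZ⟩
    obtain ⟨c, -, -, hQset⟩ := hQ.exists_setOf_mem_eq_of_neighborSet_eq (hZ w hwZ) hwQ
    exact closedNbhd_mono (by simp [hQset])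

theorem pathNu_eq_max_of_pendant [Finite W] {x y z : W}
    (hz : G.neighborSet z = {y}) (hy : G.neighborSet y = {z, x}) (hxz : x ≠ z) :
    pathNu G 3 = max (pathNu (inducedOn G {z}ᶜ) 3)
      (1 + pathNu (inducedOn G (closedNbhd G {y, x})ᶜ) 3) := by
  have hzy : G.Adj z y := (adj_iff_of_neighborSet_eq hz).mpr rfl
  have hyx : G.Adj y x := by simp [← SimpleGraph.mem_neighborSet, hy]
  have hnzx : ¬ G.Adj z x := fun h => hyx.ne' ((adj_iff_of_neighborSet_eq hz).mp h)
  refine pathNu_eq_max (t := 3) (by norm_num)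
    (isInducedPathList_three hxz.symm hzy hyx hnzx) ?_ ?_
  · calc closedNbhd G {w | w ∈ [z, y, x]}
        = closedNbhd G (insert z {y, x}) := by congr 1; ext; simp
      _ ⊆ closedNbhd G (insert y {y, x}) := closedNbhd_insert_subset_of_neighborSet_eq hz _
      _ = closedNbhd G {y, x} := by rw [Set.insert_eq_of_mem (Set.mem_insert _ _)]
  · rintro Q hQ ⟨w, hwQ, rfl⟩
    obtain ⟨c, hcw, hyc, hQset⟩ := hQ.exists_setOf_mem_eq_of_neighborSet_eq hz hwQ
    obtain rfl : c = x := by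
      simpa [hy, hcw] using show c ∈ G.neighborSet y from hyc
    exact closedNbhd_mono (by simp [hQset])

end PathMatchings

theorem pathNu_three_recursion_level_ge_two_general
    {V : Type*} [Fintype V]
    (G : SimpleGraph V)
    (s : ℕ) (z : Fin (s + 1) → V) (hz : Function.Injective z) (y0 x0 : V)
    (hzy : ∀ a, G.neighborSet (z a) = {y0})
    (hny : G.neighborSet y0 = Set.range z ∪ {x0})
    (hx0 : ¬ IsLeaf G x0) :
    (1 ≤ s →
      pathNu G 3 = max (pathNu (inducedOn G (Set.range z)ᶜ) 3)
        (1 + pathNu (inducedOn G (closedNbhd G {y0})ᶜ) 3)) ∧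
    (s = 0 →
      pathNu G 3 = max (pathNu (inducedOn G (Set.range z)ᶜ) 3)
        (1 + pathNu (inducedOn G (closedNbhd G ({y0, x0} : Set V))ᶜ) 3)) := by
  refine ⟨fun hs => ?_, ?_⟩
  · have h01 : (0 : Fin (s + 1)) ≠ 1 := by
      simp [Fin.ext_iff, Nat.mod_eq_of_lt (show 1 < s + 1 by omega)]
    exact pathNu_eq_max_of_two_pendants (hzy 0) (hzy 1) (hz.ne h01)
      (by rintro _ ⟨a, rfl⟩; exact hzy a)
  · rintro rfl
    have hrange : Set.range z = {z 0} := by simp [Set.range_unique]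
    have hx0z : x0 ≠ z 0 := fun h => hx0 (h ▸ isLeaf_of_neighborSet_eq (hzy 0))
    rw [hrange] at hny ⊢
    exact pathNu_eq_max_of_pendant (hzy 0) hny hx0z

/-- **Lemma (recursion for `ν_3`, leaf of level `≥ 2`).**
With the unicyclic/tree setup and `z_0` a leaf of highest level with `level(z_0) ≥ 2`,
write `N(y_0) = {z_0, z_1, …, z_s} ∪ {x_0}` where `y_0` is the unique neighbor of `z_0`,
`z_1, …, z_s` are leaves, and `x_0` is the unique non-leaf neighbor of `y_0`.  Then
`ν_3(G) = max(ν_3(G_{z_0,1}), 1 + ν_3(G_{z_0,2}))` if `s ≥ 1`, and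
`ν_3(G) = max(ν_3(G_{z_0,1}), 1 + ν_3(G_{z_0,3}))` if `s = 0`. -/
theorem pathNu_three_recursion_level_ge_two
    {V : Type*} [Fintype V] [LinearOrder V]
    (G : SimpleGraph V) (hconn : G.Connected)
    (m : ℕ) [NeZero m] (v : Fin m → V) (hcyc : AtMostOneCycle G v)
    (s : ℕ) (z : Fin (s + 1) → V) (hz : Function.Injective z) (y0 x0 : V)
    (hzy : ∀ a, G.neighborSet (z a) = {y0})
    (hny : G.neighborSet y0 = Set.range z ∪ {x0})
    (hx0 : ¬ IsLeaf G x0)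
    (hlevel : 2 ≤ levelTo G v (z 0))
    (hhigh : ∀ w, IsLeaf G w → levelTo G v w ≤ levelTo G v (z 0)) :
    (1 ≤ s →
      pathNu G 3 = max (pathNu (inducedOn G (Set.range z)ᶜ) 3)
        (1 + pathNu (inducedOn G (closedNbhd G {y0})ᶜ) 3)) ∧
    (s = 0 →
      pathNu G 3 = max (pathNu (inducedOn G (Set.range z)ᶜ) 3)
        (1 + pathNu (inducedOn G (closedNbhd G ({y0, x0} : Set V))ᶜ) 3)) :=
  pathNu_three_recursion_level_ge_two_general G s z hz y0 x0 hzy hny hx0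

end PathIdeals
end
end

section
/- Let P_m be the path graph on m vertices {1, …, m}. Then the 3-path induced matching number satisfies ν_3(P_m) = ⌊(m+1)/4⌋. -/
noncomputable section

namespace PathIdeals

open MvPolynomial

variable {k : Type*} [Field k] {V : Type*} [Fintype V] [LinearOrder V]

/-! In a 3-path induced matching of `P_m` the vertex sets of the paths are intervals
`{s, s+1, s+2}` that pairwise neither meet nor touch, so their left ends `s ≤ m - 3` are at
least 4 apart and there are at most `⌊(m+1)/4⌋` of them; the intervals starting at
`0, 4, 8, …` attain this bound. -/

theorem IsPathInducedMatching.not_adj {V : Type*} {G : SimpleGraph V} {t n : ℕ}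
    {P : Fin n → List V} (hP : IsPathInducedMatching G t P) {a b : Fin n} (hab : a ≠ b)
    {x y : V} (hx : x ∈ P a) (hy : y ∈ P b) : ¬ G.Adj x y := by
  intro hxy
  obtain ⟨c, hc⟩ := hP.2.2 x y ⟨a, hx⟩ ⟨b, hy⟩ hxy
  have hxyc : x ∈ P c ∧ y ∈ P c := by
    rcases hc with h | h <;> exact ⟨h.subset (by simp), h.subset (by simp)⟩
  have hac : a = c := by_contra fun h => hP.2.1 a c h x hx hxyc.1
  have hbc : b = c := by_contra fun h => hP.2.1 b c h y hy hxyc.2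
  exact hab (hac.trans hbc.symm)

theorem isPathInducedMatching_of_separated {V : Type*} {G : SimpleGraph V} {t n : ℕ}
    {P : Fin n → List V} (hpath : ∀ a, IsPathList G t (P a))
    (hinduced : ∀ a, ∀ x ∈ P a, ∀ y ∈ P a, G.Adj x y → [x, y] <:+: P a ∨ [y, x] <:+: P a)
    (hsep : ∀ a b, a ≠ b → ∀ x ∈ P a, ∀ y ∈ P b, x ≠ y ∧ ¬ G.Adj x y) :
    IsPathInducedMatching G t P := by
  refine ⟨hpath, fun a b hab x hxa hxb => (hsep a b hab x hxa x hxb).1 rfl, ?_⟩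
  rintro x y ⟨a, hx⟩ ⟨b, hy⟩ hxy
  by_cases hab : a = b
  · subst hab
    exact ⟨a, hinduced a x hx y hy hxy⟩
  · exact absurd hxy (hsep a b hab x hx y hy).2

theorem infix_of_adj_of_mem_triple {V : Type*} {G : SimpleGraph V} {p q r : V}
    (hpr : ¬ G.Adj p r) {x y : V} (hx : x ∈ [p, q, r]) (hy : y ∈ [p, q, r]) (hxy : G.Adj x y) :
    [x, y] <:+: [p, q, r] ∨ [y, x] <:+: [p, q, r] := by
  simp only [List.mem_cons, List.not_mem_nil, or_false] at hx hy
  rcases hx with rfl | rfl | rfl <;> rcases hy with rfl | rfl | rfl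
  all_goals first
    | exact absurd hxy (G.loopless.irrefl _)
    | exact absurd hxy hpr
    | exact absurd hxy.symm hpr
    | exact .inl ⟨[], [r], rfl⟩
    | exact .inr ⟨[], [r], rfl⟩
    | exact .inl ⟨[p], [], rfl⟩
    | exact .inr ⟨[p], [], rfl⟩

theorem card_le_of_pairwise_separated {ι : Type*} [Fintype ι] {N d : ℕ} (hd : 0 < d)
    (f : ι → ℕ) (hf : ∀ i, f i < N) (hsep : Pairwise fun i j => f i + d ≤ f j ∨ f j + d ≤ f i) :
    Fintype.card ι ≤ (N + d - 1) / d := by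
  have hlt : ∀ i, f i / d < (N + d - 1) / d := fun i =>
    calc f i / d ≤ (N - 1) / d := Nat.div_le_div_right (by have := hf i; omega)
      _ < (N - 1) / d + 1 := Nat.lt_succ_self _
      _ = (N + d - 1) / d := by rw [← Nat.add_div_right _ hd]; congr 1; have := hf i; omega
  have hinj : Function.Injective fun i => (⟨f i / d, hlt i⟩ : Fin ((N + d - 1) / d)) := by
    intro i j hij
    by_contra hne
    have hq : f i / d = f j / d := congrArg Fin.val hij
    rcases hsep hne with h | h <;>
    · have := Nat.div_le_div_right (c := d) h
      rw [Nat.add_div_right _ hd] at this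
      omega
  simpa using Fintype.card_le_of_injective _ hinj

theorem exists_mem_val_add_two_of_isPathList_three {m : ℕ} {l : List (Fin m)}
    (hl : IsPathList (SimpleGraph.pathGraph m) 3 l) :
    ∃ u ∈ l, ∃ w ∈ l, (u : ℕ) + 2 = w := by
  obtain ⟨x, y, z, rfl⟩ := List.length_eq_three.mp hl.1
  have hchain : List.IsChain _ [x, y, z] := hl.2.2
  simp only [List.isChain_cons_cons, SimpleGraph.pathGraph_adj] at hchain
  have hxz : (x : ℕ) ≠ z := fun h => by have := hl.2.1; simp [Fin.ext h] at this
  by_cases h : (x : ℕ) < z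
  · exact ⟨x, by simp, z, by simp, by omega⟩
  · exact ⟨z, by simp, x, by simp, by omega⟩

theorem IsPathInducedMatching.val_separated_pathGraph {m t n : ℕ}
    {P : Fin n → List (Fin m)} (hP : IsPathInducedMatching (SimpleGraph.pathGraph m) t P)
    {a b : Fin n} (hab : a ≠ b) {x y : Fin m} (hx : x ∈ P a) (hy : y ∈ P b) :
    (x : ℕ) + 2 ≤ y ∨ (y : ℕ) + 2 ≤ x := by
  have hne : (x : ℕ) ≠ y := fun h => hP.2.1 a b hab x hx (Fin.ext h ▸ hy)
  have hnadj := hP.not_adj hab hx hy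
  rw [SimpleGraph.pathGraph_adj] at hnadj
  omega

theorem IsPathInducedMatching.le_pathGraph {m n : ℕ} {P : Fin n → List (Fin m)}
    (hP : IsPathInducedMatching (SimpleGraph.pathGraph m) 3 P) : n ≤ (m + 1) / 4 := by
  choose u hu w hw huw using fun a => exists_mem_val_add_two_of_isPathList_three (hP.1 a)
  have hsep : Pairwise fun a b => (u a : ℕ) + 4 ≤ u b ∨ (u b : ℕ) + 4 ≤ u a := by
    intro a b hab
    have := hP.val_separated_pathGraph hab (hu a) (hu b)
    have := hP.val_separated_pathGraph hab (hu a) (hw b)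
    have := hP.val_separated_pathGraph hab (hw a) (hu b)
    have := huw a
    have := huw b
    omega
  have hlt : ∀ a, (u a : ℕ) < m - 2 := fun a => by have := huw a; have := (w a).isLt; omega
  have := card_le_of_pairwise_separated (by norm_num) _ hlt hsep
  simp only [Fintype.card_fin] at this
  omega

def pathGraphPacking (m : ℕ) : Fin ((m + 1) / 4) → List (Fin m) := fun a =>
  [⟨4 * a, by omega⟩, ⟨4 * a + 1, by omega⟩, ⟨4 * a + 2, by omega⟩]

theorem mem_pathGraphPacking {m : ℕ} {a : Fin ((m + 1) / 4)} {x : Fin m} :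
    x ∈ pathGraphPacking m a ↔ 4 * (a : ℕ) ≤ x ∧ (x : ℕ) ≤ 4 * a + 2 := by
  simp only [pathGraphPacking, List.mem_cons, List.not_mem_nil, or_false, Fin.ext_iff]
  omega

theorem isPathInducedMatching_pathGraphPacking (m : ℕ) :
    IsPathInducedMatching (SimpleGraph.pathGraph m) 3 (pathGraphPacking m) := by
  refine isPathInducedMatching_of_separated (fun a => ⟨rfl, ?_, ?_⟩) (fun a => ?_) ?_
  · simp [pathGraphPacking, Fin.ext_iff]
  · show List.IsChain _ _
    simp [pathGraphPacking, List.isChain_cons_cons, SimpleGraph.pathGraph_adj]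
  · refine fun x hx y hy => infix_of_adj_of_mem_triple ?_ hx hy
    simp only [SimpleGraph.pathGraph_adj]
    omega
  · intro a b hab x hx y hy
    rw [mem_pathGraphPacking] at hx hy
    have : (a : ℕ) ≠ b := Fin.val_ne_of_ne hab
    rw [SimpleGraph.pathGraph_adj, Ne, Fin.ext_iff]
    omega

/-- **Lemma (3-path induced matching number of paths).**
Let `P_m` be the path graph on `m` vertices.  Then `ν_3(P_m) = ⌊(m+1)/4⌋`. -/
theorem pathNu_three_pathGraph (m : ℕ) :
    pathNu (SimpleGraph.pathGraph m) 3 = (m + 1) / 4 :=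
  IsGreatest.csSup_eq ⟨⟨_, isPathInducedMatching_pathGraphPacking m⟩,
    fun _ ⟨_, hP⟩ => hP.le_pathGraph⟩

end PathIdeals
end
end
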